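/- Let N be a module over a commutative ring, p a ring element, and for x in the ring write N_x = {n ∈ N : xn = 0}. Suppose π is an element with π^p = p (p a prime number, viewing exponent p-fold product). Then for 1 ≤ t ≤ p, multiplication by π^{t-1} induces an injective map N_{π^t}/N_{π^{t-1}} → N_π. Consequently, for any additive length function λ and ring element r, λ(r^p N_p) ≤ p · λ(r N_π). -/

import Mathlib

open scoped ENNReal

open LinearMap Submodule

section Aux

variable {A : Type} [CommRing A]
variable (lam : ∀ (M : Type) [AddCommGroup M] [Module A M], ℝ≥0∞)
variable (hadd : ∀ (M₁ M₂ M₃ : Type) [AddCommGroup M₁] [Module A M₁] [AddCommGroup M₂]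
      [Module A M₂] [AddCommGroup M₃] [Module A M₃]
      (f : M₁ →ₗ[A] M₂) (g : M₂ →ₗ[A] M₃),
      Function.Injective f → Function.Surjective g → Function.Exact f g →
        lam M₂ = lam M₁ + lam M₃)

include hadd

theorem lam_inj' {M₁ M₂ : Type} [AddCommGroup M₁] [Module A M₁] [AddCommGroup M₂]
    [Module A M₂] (f : M₁ →ₗ[A] M₂) (hf : Function.Injective f) : lam M₁ ≤ lam M₂ := by
  rw [hadd M₁ M₂ (M₂ ⧸ LinearMap.range f) f (LinearMap.range f).mkQ hf
    (Submodule.mkQ_surjective _) (by rw [LinearMap.exact_iff, Submodule.ker_mkQ])]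
  exact le_self_add

theorem lam_iso' {M₁ M₂ : Type} [AddCommGroup M₁] [Module A M₁] [AddCommGroup M₂]
    [Module A M₂] (e : M₁ ≃ₗ[A] M₂) : lam M₁ = lam M₂ :=
  le_antisymm (lam_inj' lam hadd e.toLinearMap e.injective)
    (lam_inj' lam hadd e.symm.toLinearMap e.symm.injective)

theorem lam_split' {M₂ M₃ : Type} [AddCommGroup M₂] [Module A M₂] [AddCommGroup M₃]
    [Module A M₃] (g : M₂ →ₗ[A] M₃) :
    lam M₂ = lam (LinearMap.ker g) + lam (LinearMap.range g) :=
  hadd _ _ _ (LinearMap.ker g).subtype g.rangeRestrict (Submodule.injective_subtype _)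
    (LinearMap.surjective_rangeRestrict g)
    (by rw [LinearMap.exact_iff, Submodule.range_subtype, LinearMap.ker_rangeRestrict])

theorem lam_restrict' {N : Type} [AddCommGroup N] [Module A N] (S : Submodule A N) (s : A) :
    lam (LinearMap.range (LinearMap.lsmul A S s)) =
      lam (LinearMap.range ((LinearMap.lsmul A N s).comp S.subtype)) := by
  have hcomm : S.subtype.comp (LinearMap.lsmul A S s) =
      (LinearMap.lsmul A N s).comp S.subtype := by
    ext v; rfl
  have e := Submodule.equivMapOfInjective S.subtype (Submodule.injective_subtype S)
    (LinearMap.range (LinearMap.lsmul A S s))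
  have heq : Submodule.map S.subtype (LinearMap.range (LinearMap.lsmul A S s)) =
      LinearMap.range ((LinearMap.lsmul A N s).comp S.subtype) := by
    rw [← LinearMap.range_comp, hcomm]
  rw [heq] at e
  exact lam_iso' lam hadd e

/-- Key exchange lemma: λ((r·a)V) ≤ λ((π·a)V) + λ(r·N_π). -/
theorem lam_exchange' {N : Type} [AddCommGroup N] [Module A N] (π r a : A)
    (V : Submodule A N) :
    lam (LinearMap.range ((LinearMap.lsmul A N (r * a)).comp V.subtype)) ≤
      lam (LinearMap.range ((LinearMap.lsmul A N (π * a)).comp V.subtype)) +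
      lam (LinearMap.range ((LinearMap.lsmul A N r).comp
        (Submodule.torsionBy A N π).subtype)) := by
  set νr := (LinearMap.lsmul A N (r * a)).comp V.subtype with hνr
  set νπ := (LinearMap.lsmul A N (π * a)).comp V.subtype with hνπ
  set Ψ : V →ₗ[A] N × N := LinearMap.prod νπ νr with hΨ
  set R := LinearMap.range Ψ with hR
  set g1 : R →ₗ[A] N := (LinearMap.fst A N N).comp R.subtype with hg1def
  set g2 : R →ₗ[A] N := (LinearMap.snd A N N).comp R.subtype with hg2def
  have hg2 : LinearMap.range g2 = LinearMap.range νr := by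
    have h : g2.comp Ψ.rangeRestrict = νr := by ext v; rfl
    rw [← h]
    exact (LinearMap.range_comp_of_range_eq_top g2 (LinearMap.range_rangeRestrict Ψ)).symm
  have hg1 : LinearMap.range g1 = LinearMap.range νπ := by
    have h : g1.comp Ψ.rangeRestrict = νπ := by ext v; rfl
    rw [← h]
    exact (LinearMap.range_comp_of_range_eq_top g1 (LinearMap.range_rangeRestrict Ψ)).symm
  -- step 1 : lam (range νr) ≤ lam R
  have step1 : lam (LinearMap.range νr) ≤ lam R := by
    rw [← hg2, lam_split' lam hadd g2]
    exact le_add_self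
  -- step 2
  have step2 : lam R = lam (LinearMap.ker g1) + lam (LinearMap.range νπ) := by
    rw [lam_split' lam hadd g1, hg1]
  -- step 3 : ker g1 injects into r N_π
  have step3 : lam (LinearMap.ker g1) ≤
      lam (LinearMap.range ((LinearMap.lsmul A N r).comp
        (Submodule.torsionBy A N π).subtype)) := by
    set W := LinearMap.range ((LinearMap.lsmul A N r).comp
      (Submodule.torsionBy A N π).subtype) with hW
    have hmem : ∀ z : LinearMap.ker g1, g2 ((LinearMap.ker g1).subtype z) ∈ W := by
      rintro ⟨⟨x, hx⟩, hz⟩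
      obtain ⟨v, hv⟩ := hx
      have h1 : (π * a) • (v : N) = 0 := by
        have : g1 ⟨x, ⟨v, hv⟩⟩ = 0 := hz
        have hx1 : x.1 = 0 := this
        have : (π * a) • (v : N) = x.1 := congrArg Prod.fst hv
        rw [this, hx1]
      refine ⟨⟨a • (v : N), ?_⟩, ?_⟩
      · rw [Submodule.mem_torsionBy_iff, smul_smul]
        exact h1
      · show r • (a • (v : N)) = x.2
        rw [smul_smul]
        exact congrArg Prod.snd hv
    set h₀ : LinearMap.ker g1 →ₗ[A] W :=
      LinearMap.codRestrict W (g2.comp (LinearMap.ker g1).subtype) hmem with hh₀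
    have hinj : Function.Injective h₀ := by
      rintro ⟨⟨x, hx⟩, hz⟩ ⟨⟨y, hy⟩, hw⟩ h
      have h2 : x.2 = y.2 := congrArg Subtype.val h
      have hx1 : x.1 = 0 := hz
      have hy1 : y.1 = 0 := hw
      apply Subtype.ext; apply Subtype.ext
      exact Prod.ext (by rw [hx1, hy1]) h2
    exact lam_inj' lam hadd h₀ hinj
  calc lam (LinearMap.range νr) ≤ lam R := step1
    _ = lam (LinearMap.ker g1) + lam (LinearMap.range νπ) := step2
    _ ≤ _ + lam (LinearMap.range νπ) := add_le_add_left step3 _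
    _ = lam (LinearMap.range νπ) + _ := add_comm _ _

end Aux

/-- Let `N` be a module over a commutative ring `A`, let `p` be a prime number and
`π ∈ A` with `π ^ p = p`.  Writing `N_x` for the `x`-torsion submodule, for `1 ≤ t ≤ p`
multiplication by `π^(t-1)` induces an injective map `N_{π^t}/N_{π^{t-1}} → N_π`.
Consequently, for any additive length function `λ` and ring element `r`,
`λ(r^p N_p) ≤ p · λ(r N_π)`. -/
theorem torsion_filtration_and_lambda_bound
    (A : Type) [CommRing A] (p : ℕ) (hp : p.Prime) (π : A) (hπ : π ^ p = (p : A))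
    (N : Type) [AddCommGroup N] [Module A N]
    (lam : ∀ (M : Type) [AddCommGroup M] [Module A M], ℝ≥0∞)
    (hadd : ∀ (M₁ M₂ M₃ : Type) [AddCommGroup M₁] [Module A M₁] [AddCommGroup M₂]
      [Module A M₂] [AddCommGroup M₃] [Module A M₃]
      (f : M₁ →ₗ[A] M₂) (g : M₂ →ₗ[A] M₃),
      Function.Injective f → Function.Surjective g → Function.Exact f g →
        lam M₂ = lam M₁ + lam M₃)
    (r : A) :
    (∀ t : ℕ, 1 ≤ t → t ≤ p →
      ∃ f : ((Submodule.torsionBy A N (π ^ t)) ⧸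
          (Submodule.comap (Submodule.torsionBy A N (π ^ t)).subtype
            (Submodule.torsionBy A N (π ^ (t - 1))))) →ₗ[A]
          (Submodule.torsionBy A N π),
        Function.Injective f ∧
          ∀ n : Submodule.torsionBy A N (π ^ t),
            (f (Submodule.Quotient.mk n) : N) = π ^ (t - 1) • (n : N)) ∧
    lam (LinearMap.range
        (LinearMap.lsmul A (Submodule.torsionBy A N ((p : A))) (r ^ p))) ≤
      p * lam (LinearMap.range (LinearMap.lsmul A (Submodule.torsionBy A N π) r)) := by

  constructor
  · -- Part 1
    intro t ht1 _
    have hmul : π ^ (t - 1) * π = π ^ t := by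
      rw [← pow_succ]; congr 1; omega
    have hmem : ∀ n : Submodule.torsionBy A N (π ^ t),
        π ^ (t - 1) • (n : N) ∈ Submodule.torsionBy A N π := by
      intro n
      rw [Submodule.mem_torsionBy_iff, smul_smul, mul_comm, hmul]
      exact (Submodule.mem_torsionBy_iff _ _).mp n.2
    set S := Submodule.torsionBy A N (π ^ t) with hS
    set g₀ : S →ₗ[A] Submodule.torsionBy A N π :=
      LinearMap.codRestrict _ ((LinearMap.lsmul A N (π ^ (t - 1))).comp S.subtype) hmem
      with hg₀
    set P := Submodule.comap S.subtype (Submodule.torsionBy A N (π ^ (t - 1))) with hP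
    have hle : P ≤ LinearMap.ker g₀ := by
      intro n hn
      have h1 : π ^ (t - 1) • (n : N) = 0 := (Submodule.mem_torsionBy_iff _ _).mp hn
      rw [LinearMap.mem_ker]
      exact Subtype.ext h1
    refine ⟨P.liftQ g₀ hle, ?_, ?_⟩
    · rw [← LinearMap.ker_eq_bot]
      apply Submodule.ker_liftQ_eq_bot
      intro n hn
      have h1 : π ^ (t - 1) • (n : N) = 0 := congrArg Subtype.val hn
      exact (Submodule.mem_torsionBy_iff _ _).mpr h1
    · intro n; rfl
  · -- Part 2
    set Np := Submodule.torsionBy A N ((p : A)) with hNp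
    set Nπ := Submodule.torsionBy A N π with hNπ
    set lamW := lam (LinearMap.range ((LinearMap.lsmul A N r).comp Nπ.subtype)) with hlamW
    have key : ∀ t : ℕ, t ≤ p →
        lam (LinearMap.range ((LinearMap.lsmul A N (r ^ p)).comp Np.subtype)) ≤
          lam (LinearMap.range
            ((LinearMap.lsmul A N (r ^ (p - t) * π ^ t)).comp Np.subtype)) +
          (t : ℝ≥0∞) * lamW := by
      intro t
      induction t with
      | zero =>
        intro _
        have e : r ^ (p - 0) * π ^ 0 = r ^ p := by rw [Nat.sub_zero, pow_zero, mul_one]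
        rw [e]
        simp
      | succ t ih =>
        intro h
        have ht : t ≤ p := Nat.le_of_succ_le h
        have hra : r * (r ^ (p - (t + 1)) * π ^ t) = r ^ (p - t) * π ^ t := by
          have e1 : p - t = (p - (t + 1)) + 1 := by omega
          rw [e1, pow_succ]; ring
        have hpa : π * (r ^ (p - (t + 1)) * π ^ t) = r ^ (p - (t + 1)) * π ^ (t + 1) := by
          rw [pow_succ]; ring
        have hex := lam_exchange' lam hadd π r (r ^ (p - (t + 1)) * π ^ t) Np
        rw [hra, hpa] at hex
        calc lam (LinearMap.range ((LinearMap.lsmul A N (r ^ p)).comp Np.subtype))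
            ≤ lam (LinearMap.range
                ((LinearMap.lsmul A N (r ^ (p - t) * π ^ t)).comp Np.subtype)) +
              (t : ℝ≥0∞) * lamW := ih ht
          _ ≤ (lam (LinearMap.range
                ((LinearMap.lsmul A N (r ^ (p - (t + 1)) * π ^ (t + 1))).comp Np.subtype)) +
              lamW) + (t : ℝ≥0∞) * lamW := add_le_add_left hex _
          _ = lam (LinearMap.range
                ((LinearMap.lsmul A N (r ^ (p - (t + 1)) * π ^ (t + 1))).comp Np.subtype)) +
              ((t + 1 : ℕ) : ℝ≥0∞) * lamW := by push_cast; ring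
    have hend : r ^ (p - p) * π ^ p = ((p : ℕ) : A) := by
      rw [Nat.sub_self, pow_zero, one_mul, hπ]
    have hν0 : (LinearMap.lsmul A N (((p : ℕ) : A))).comp Np.subtype = 0 := by
      ext v
      exact (Submodule.mem_torsionBy_iff _ _).mp v.2
    have hbot : ∀ (M : Type) [AddCommGroup M] [Module A M],
        lam M = lam (↥(⊥ : Submodule A N)) + lam M := by
      intro M _ _
      exact hadd _ _ _ (0 : ↥(⊥ : Submodule A N) →ₗ[A] M) LinearMap.id
        (fun x y _ => Subsingleton.elim x y) (fun x => ⟨x, rfl⟩)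
        (by rw [LinearMap.exact_iff, LinearMap.ker_id, LinearMap.range_zero])
    have hk := key p le_rfl
    rw [hend, hν0, LinearMap.range_zero] at hk
    have harith : lam (↥(⊥ : Submodule A N)) + (p : ℝ≥0∞) * lamW = (p : ℝ≥0∞) * lamW := by
      have hppos : 0 < p := hp.pos
      obtain ⟨q, hq⟩ : ∃ q, p = q + 1 := ⟨p - 1, by omega⟩
      subst hq
      calc lam (↥(⊥ : Submodule A N)) + ((q + 1 : ℕ) : ℝ≥0∞) * lamW
          = (q : ℝ≥0∞) * lamW + (lam (↥(⊥ : Submodule A N)) + lamW) := by push_cast; ring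
        _ = (q : ℝ≥0∞) * lamW + lamW := by rw [← hbot _]
        _ = ((q + 1 : ℕ) : ℝ≥0∞) * lamW := by push_cast; ring
    rw [lam_restrict' lam hadd Np (r ^ p), lam_restrict' lam hadd Nπ r]
    exact hk.trans (le_of_eq harith)
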